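/- arXiv:2306.14703 — 2 statements merged into one kernel-verified Lean document; each statement's English description precedes it below -/
import Mathlib

section
/- For any process (X_i)_{i∈ℤ} over a D-ary alphabet and any constant C > 0, the recurrence time satisfies P(R^{(1)}_k ≤ C / P(X₁^k | X_{k+1}^∞)) ≤ C(1 + k log D), where P(X₁^k | X_{k+1}^∞) is the conditional probability of the realized block X₁^k given the realized future X_{k+1}^∞. -/
open MeasureTheory ProbabilityTheory Filter Set
open scoped ENNReal NNReal

/-- The Hilberg exponent of a sequence of reals. -/
noncomputable def hilberg (a : ℕ → ℝ) : ℝ :=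
  Filter.limsup (fun k => max 0 (Real.log (a k) / Real.log k)) Filter.atTop

/-- The recurrence time `R⁽¹⁾_k`: the first position `i ≥ 1` such that
`X_{i+1}^{i+k} = X_1^k`, or `∞` if there is none. -/
noncomputable def recTime {Ω A : Type*} (X : ℤ → Ω → A) (k : ℕ) (ω : Ω) : ℕ∞ :=
  sInf {e : ℕ∞ | ∃ i : ℕ, e = (i : ℕ∞) ∧ 1 ≤ i ∧
    ∀ m : ℕ, m < k → X ((i : ℤ) + 1 + (m : ℤ)) ω = X (1 + (m : ℤ)) ω}

/-- The repetition time `R⁽²⁾_k`: the first position `i ≥ 1` such that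
`X_{i+1}^{i+k} = X_{j+1}^{j+k}` for some `0 ≤ j < i`, or `∞` if there is none. -/
noncomputable def repTime {Ω A : Type*} (X : ℤ → Ω → A) (k : ℕ) (ω : Ω) : ℕ∞ :=
  sInf {e : ℕ∞ | ∃ i : ℕ, e = (i : ℕ∞) ∧ 1 ≤ i ∧ ∃ j : ℕ, j < i ∧
    ∀ m : ℕ, m < k → X ((i : ℤ) + 1 + (m : ℤ)) ω = X ((j : ℤ) + 1 + (m : ℤ)) ω}

/-- The longest match length `L⁽¹⁾_n`. -/
noncomputable def matchLen {Ω A : Type*} (X : ℤ → Ω → A) (n : ℕ) (ω : Ω) : ℕ :=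
  sSup ({0} ∪ {k : ℕ | 1 ≤ k ∧ ∃ i : ℕ, 0 < i ∧ i + k ≤ n ∧
    ∀ m : ℕ, m < k → X ((i : ℤ) + 1 + (m : ℤ)) ω = X (1 + (m : ℤ)) ω})

/-- The maximal repetition length `L⁽²⁾_n`. -/
noncomputable def repLen {Ω A : Type*} (X : ℤ → Ω → A) (n : ℕ) (ω : Ω) : ℕ :=
  sSup ({0} ∪ {k : ℕ | 1 ≤ k ∧ ∃ i j : ℕ, j < i ∧ i + k ≤ n ∧
    ∀ m : ℕ, m < k → X ((i : ℤ) + 1 + (m : ℤ)) ω = X ((j : ℤ) + 1 + (m : ℤ)) ω})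

/-- `P(X_1^k)` evaluated at the realized block: the probability that a fresh
sample agrees with `ω` on coordinates `1,…,k`. -/
noncomputable def blockProb {Ω A : Type*} [MeasurableSpace Ω] (μ : Measure Ω)
    (X : ℤ → Ω → A) (k : ℕ) (ω : Ω) : ℝ :=
  (μ {ω' | ∀ m : ℕ, m < k → X (1 + (m : ℤ)) ω' = X (1 + (m : ℤ)) ω}).toReal

/-- The Shannon entropy `H₁(X_1^k) = E[-log P(X_1^k)]`. -/
noncomputable def shannonEnt {Ω A : Type*} [MeasurableSpace Ω] (μ : Measure Ω)
    (X : ℤ → Ω → A) (k : ℕ) : ℝ :=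
  ∫ ω, -Real.log (blockProb μ X k ω) ∂μ

/-- The σ-algebra generated by the future coordinates `X_j, X_{j+1}, …`. -/
def futureSigma {Ω A : Type*} [MeasurableSpace A] (X : ℤ → Ω → A) (j : ℤ) :
    MeasurableSpace Ω :=
  ⨆ i : {i : ℤ // j ≤ i}, MeasurableSpace.comap (X i) inferInstance

/-- `P(X_1^k | X_j^∞)` evaluated at the realized block: the conditional probability,
given the σ-algebra of the future `X_j^∞`, of the block `X_1^k`, evaluated at the
realized value of `X_1^k`. -/
noncomputable def condBlockProb {Ω A : Type*} [MeasurableSpace Ω] [MeasurableSpace A]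
    (μ : Measure Ω) (X : ℤ → Ω → A) (k : ℕ) (j : ℤ) (ω : Ω) : ℝ :=
  ∑' x : Fin k → A,
    ({ω'' | ∀ m : Fin k, X (1 + (m : ℤ)) ω'' = x m}.indicator (fun _ => (1 : ℝ)) ω) *
      (μ[({ω' | ∀ m : Fin k, X (1 + (m : ℤ)) ω' = x m}.indicator fun _ => (1 : ℝ)) |
        futureSigma X j]) ω

/-- The min-entropy `H_∞(X_1^k) = -log max_x P(X_1^k = x)`. -/
noncomputable def minEntropy {Ω A : Type*} [MeasurableSpace Ω] (μ : Measure Ω)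
    (X : ℤ → Ω → A) (k : ℕ) : ℝ :=
  -Real.log (⨆ x : Fin k → A, (μ {ω | ∀ m : Fin k, X (1 + (m : ℤ)) ω = x m}).toReal)

/-- The conditional min-entropy `H_∞(X_1^k | X_{k+1}^{k+i}) = -log E[max_x P(X_1^k = x | X_{k+1}^{k+i})]`,
written as `-log ∑_y max_x P(X_1^k = x, X_{k+1}^{k+i} = y)`. -/
noncomputable def condMinEntropy {Ω A : Type*} [MeasurableSpace Ω] (μ : Measure Ω)
    (X : ℤ → Ω → A) (k i : ℕ) : ℝ :=
  -Real.log (∑' y : Fin i → A, ⨆ x : Fin k → A,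
    (μ {ω | (∀ m : Fin k, X (1 + (m : ℤ)) ω = x m) ∧
      ∀ m : Fin i, X ((k : ℤ) + 1 + (m : ℤ)) ω = y m}).toReal)

/-- The context length `I_k := min {i ≥ 1 : log i ≥ H_∞(X_1^k | X_{k+1}^{k+i})}`. -/
noncomputable def contextLen {Ω A : Type*} [MeasurableSpace Ω] (μ : Measure Ω)
    (X : ℤ → Ω → A) (k : ℕ) : ℕ :=
  sInf {i : ℕ | 1 ≤ i ∧ condMinEntropy μ X k i ≤ Real.log i}

/-- The weighted conditional entropy
`H_•(X_1^k | X_{k+1}^∞) := -log ∑_{i=1}^∞ e^{-H_∞(X_1^k|X_{k+1}^{k+i})}/(i(i+1))`. -/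
noncomputable def weightedCondEntropy {Ω A : Type*} [MeasurableSpace Ω] (μ : Measure Ω)
    (X : ℤ → Ω → A) (k : ℕ) : ℝ :=
  -Real.log (∑' i : ℕ,
    Real.exp (-condMinEntropy μ X k (i + 1)) / ((i + 1) * (i + 2)))

/-- The median of a real random variable: `sup {r : P(X < r) ≤ 1/2}`. -/
noncomputable def medianOf {Ω : Type*} [MeasurableSpace Ω] (μ : Measure Ω) (f : Ω → ℝ) : ℝ :=
  sSup {r : ℝ | (μ {ω | f ω < r}).toReal ≤ 1 / 2}

/-!
For a block `x ∈ A^k` let `ρₓ` be the first recurrence time of `x` in the sequence obtained by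
prefixing `x` to the realized future `X_{k+1}, X_{k+2}, …`. It is measurable with respect to the
future and coincides with `R_k` on the event `{X₁^k = x}`. Two different blocks cannot recur at
the same time before the same future (read the prefix backwards off the future), so pointwise
`∑ₓ 1/ρₓ ≤ H_{D^k} ≤ 1 + k log D`. On the future-measurable event `{ρₓ · P(X₁^k = x | future) ≤ C}`
the conditional probability of `{X₁^k = x}` is at most `C/ρₓ`, so integrating over that event
bounds the probability of `{X₁^k = x}` inside it by `𝔼[C/ρₓ]`; summing over `x` gives
`C (1 + k log D)`.
-/

lemma harmonic_monotone : Monotone harmonic :=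
  monotone_nat_of_le_succ fun n => by
    rw [harmonic_succ]
    exact le_add_of_nonneg_right (by positivity)

lemma sum_inv_le_harmonic_card {t : Finset ℕ} (ht : 0 ∉ t) :
    ∑ r ∈ t, (r : ℝ)⁻¹ ≤ harmonic t.card := by
  induction t using Finset.induction_on_max with
  | empty => simp
  | insert a s hlt ih =>
    have has : a ∉ s := fun h => (hlt a h).false
    have hs0 : 0 ∉ s := fun h => ht (Finset.mem_insert_of_mem h)
    have ha0 : a ≠ 0 := fun h => ht (h ▸ Finset.mem_insert_self a s)
    have hcard : s.card + 1 ≤ a := by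
      have hsub : s ⊆ Finset.Ioo 0 a := fun r hr =>
        Finset.mem_Ioo.2 ⟨Nat.pos_of_ne_zero (by rintro rfl; exact hs0 hr), hlt r hr⟩
      have := (Finset.card_le_card hsub).trans_eq (Nat.card_Ioo 0 a)
      omega
    have ha : (a : ℝ)⁻¹ ≤ ((s.card : ℝ) + 1)⁻¹ :=
      inv_anti₀ (by positivity) (by exact_mod_cast hcard)
    rw [Finset.sum_insert has, Finset.card_insert_of_notMem has, harmonic_succ]
    push_cast
    linarith [ih hs0]

lemma sum_inv_le_one_add_log_card {ι : Type*} [Fintype ι] (f : ι → ℕ)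
    (hf : ∀ x y, f x = f y → f x ≠ 0 → x = y) :
    ∑ x, (f x : ℝ)⁻¹ ≤ 1 + Real.log (Fintype.card ι) := by
  classical
  set s := Finset.univ.filter fun x => f x ≠ 0
  have hinj : Set.InjOn f s := fun x hx y _ hxy => hf x y hxy (Finset.mem_filter.1 hx).2
  have hcard : (s.image f).card ≤ Fintype.card ι :=
    Finset.card_image_le.trans (Finset.card_le_univ s)
  calc ∑ x, (f x : ℝ)⁻¹ = ∑ r ∈ s.image f, (r : ℝ)⁻¹ := by
        rw [Finset.sum_image hinj, Finset.sum_filter_of_ne fun x _ hx => by simpa using hx]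
    _ ≤ harmonic (s.image f).card := sum_inv_le_harmonic_card (by simp [s])
    _ ≤ harmonic (Fintype.card ι) := by exact_mod_cast harmonic_monotone hcard
    _ ≤ 1 + Real.log (Fintype.card ι) := harmonic_le_one_add_log _

section Recurrence

variable {A : Type*}

def IsRecurrence (s : ℕ → A) (k i : ℕ) : Prop :=
  1 ≤ i ∧ ∀ m < k, s (i + m) = s m

/-- This is `0` when there is no recurrence (`sInf ∅ = 0`); as `(0 : ℝ)⁻¹ = 0`, such blocks drop
out of the sums of reciprocals below. -/
noncomputable def firstRecurrence (s : ℕ → A) (k : ℕ) : ℕ :=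
  sInf {i | IsRecurrence s k i}

lemma isRecurrence_firstRecurrence {s : ℕ → A} {k : ℕ} (h : firstRecurrence s k ≠ 0) :
    IsRecurrence s k (firstRecurrence s k) :=
  Nat.sInf_mem (Nat.nonempty_of_pos_sInf (Nat.pos_of_ne_zero h))

lemma IsRecurrence.eq {s t : ℕ → A} {k i : ℕ} (hs : IsRecurrence s k i)
    (ht : IsRecurrence t k i) (hst : ∀ j, k ≤ j → s j = t j) : s = t := by
  suffices h : ∀ n j, k ≤ j + n → s j = t j from funext fun j => h k j (by omega)
  intro n
  induction n with
  | zero => exact hst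
  | succ n ih =>
    intro j hj
    by_cases hjk : k ≤ j
    · exact hst j hjk
    · rw [← hs.2 j (by omega), ← ht.2 j (by omega)]
      exact ih (i + j) (by have := hs.1; omega)

def splice {k : ℕ} (x : Fin k → A) (s : ℕ → A) (j : ℕ) : A :=
  if h : j < k then x ⟨j, h⟩ else s j

lemma splice_of_le {k : ℕ} (x : Fin k → A) (s : ℕ → A) {j : ℕ} (hj : k ≤ j) :
    splice x s j = s j :=
  dif_neg (by omega)

lemma splice_self (k : ℕ) (s : ℕ → A) : splice (fun m : Fin k => s m) s = s := by
  funext j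
  unfold splice
  split_ifs <;> rfl

lemma splice_injective {k : ℕ} (s : ℕ → A) : Function.Injective fun x : Fin k → A => splice x s :=
  fun x y h => funext fun m => by simpa [splice] using congrFun h m

lemma sum_inv_firstRecurrence_splice_le [Fintype A] (k : ℕ) (s : ℕ → A) :
    ∑ x : Fin k → A, (firstRecurrence (splice x s) k : ℝ)⁻¹
      ≤ 1 + k * Real.log (Fintype.card A) := by
  have hinj (x y : Fin k → A)
      (hxy : firstRecurrence (splice x s) k = firstRecurrence (splice y s) k)
      (h0 : firstRecurrence (splice x s) k ≠ 0) : x = y := by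
    have hx := isRecurrence_firstRecurrence h0
    have hy := isRecurrence_firstRecurrence (hxy ▸ h0)
    rw [← hxy] at hy
    refine splice_injective s (hx.eq hy fun j hj => ?_)
    simp only [splice_of_le _ _ hj]
  calc _ ≤ 1 + Real.log (Fintype.card (Fin k → A)) := sum_inv_le_one_add_log_card _ hinj
    _ = 1 + k * Real.log (Fintype.card A) := by
      rw [Fintype.card_fun, Fintype.card_fin, Nat.cast_pow, Real.log_pow]

section Measurability

variable {Ω : Type*} {m : MeasurableSpace Ω} [MeasurableSpace A] [MeasurableEq A]

lemma measurable_sInf_setOf_nat {p : ℕ → Ω → Prop} (hp : ∀ i, Measurable (p i)) :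
    Measurable fun ω => sInf {i | p i ω} := by
  refine measurable_of_Iic fun n => ?_
  have h : (fun ω => sInf {i | p i ω}) ⁻¹' Iic n =
      {ω | (∃ i, i ≤ n ∧ p i ω) ∨ ∀ i, ¬ p i ω} := by
    ext ω
    simp only [mem_preimage, mem_Iic, mem_ofPred_eq]
    constructor
    · intro hle
      by_cases hne : {i | p i ω}.Nonempty
      · exact Or.inl ⟨_, hle, Nat.sInf_mem hne⟩
      · exact Or.inr fun i hi => hne ⟨i, hi⟩
    · rintro (⟨i, hi, hpi⟩ | hnone)
      · exact (Nat.sInf_le hpi).trans hi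
      · have hempty : {i | p i ω} = ∅ := eq_empty_of_forall_notMem hnone
        rw [hempty, Nat.sInf_empty]
        exact Nat.zero_le n
  rw [h]
  exact ((Measurable.exists fun i => measurable_const.and (hp i)).or
    (Measurable.forall fun i => (hp i).not)).setOf

lemma measurable_isRecurrence {s : Ω → ℕ → A} (hs : ∀ j, Measurable fun ω => s ω j)
    (k i : ℕ) : Measurable fun ω => IsRecurrence (s ω) k i :=
  measurable_const.and (Measurable.forall fun _ => measurable_const.imp ((hs _).eq (hs _)))

lemma measurable_firstRecurrence {s : Ω → ℕ → A} (hs : ∀ j, Measurable fun ω => s ω j)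
    (k : ℕ) : Measurable fun ω => firstRecurrence (s ω) k :=
  measurable_sInf_setOf_nat (measurable_isRecurrence hs k)

end Measurability

end Recurrence

section ConditionalMarkov

variable {Ω : Type*} {m m0 : MeasurableSpace Ω} {μ : Measure Ω}

lemma integrable_const_div_natCast [IsFiniteMeasure μ] {ρ : Ω → ℕ} (hρ : Measurable ρ)
    (C : ℝ) : Integrable (fun ω => C / ρ ω) μ := by
  refine Integrable.of_bound ((measurable_from_top.comp hρ).const_div C).aestronglyMeasurable |C|
    (ae_of_all _ fun ω => ?_)
  rw [Real.norm_eq_abs, abs_div, Nat.abs_cast]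
  rcases Nat.eq_zero_or_pos (ρ ω) with h0 | hpos
  · simp [h0]
  · exact div_le_self (abs_nonneg C) (by exact_mod_cast hpos)

lemma measureReal_inter_condExp_le_integral_div [IsFiniteMeasure μ] (hm : m ≤ m0) {B : Set Ω}
    (hB : MeasurableSet B) {ρ : Ω → ℕ} (hρ : Measurable[m] ρ) {C : ℝ} (hC : 0 ≤ C) :
    μ.real (B ∩ {ω | 0 < ρ ω ∧ ρ ω * μ[B.indicator (fun _ => (1 : ℝ)) | m] ω ≤ C})
      ≤ ∫ ω, C / ρ ω ∂μ := by
  set g := μ[B.indicator (fun _ => (1 : ℝ)) | m]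
  set V := {ω | 0 < ρ ω ∧ ρ ω * g ω ≤ C}
  have hgm : Measurable[m] g := stronglyMeasurable_condExp.measurable
  have hV : MeasurableSet[m] V := by
    have hρr : Measurable[m] fun ω => (ρ ω : ℝ) := measurable_from_top.comp hρ
    exact (measurableSet_lt measurable_const hρ).inter
      (measurableSet_le (hρr.mul hgm) measurable_const)
  have hdiv_int : Integrable (fun ω => C / ρ ω) μ :=
    integrable_const_div_natCast (hρ.mono hm le_rfl) C
  calc μ.real (B ∩ V) = ∫ ω in V, g ω ∂μ := by
        rw [setIntegral_condExp hm ((integrable_const 1).indicator hB) hV,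
          integral_indicator_const _ hB, smul_eq_mul, mul_one, measureReal_restrict_apply hB]
    _ ≤ ∫ ω in V, C / ρ ω ∂μ := by
      refine setIntegral_mono_on integrable_condExp.integrableOn hdiv_int.integrableOn
        (hm _ hV) fun ω ⟨hρ0, hρg⟩ => ?_
      rw [le_div_iff₀ (by exact_mod_cast hρ0)]
      linarith
    _ ≤ ∫ ω, C / ρ ω ∂μ :=
      setIntegral_le_integral hdiv_int (ae_of_all _ fun ω => by positivity)

lemma measure_iUnion_inter_condExp_le [IsProbabilityMeasure μ] {ι : Type*} [Fintype ι]
    (hm : m ≤ m0) {B : ι → Set Ω} (hB : ∀ x, MeasurableSet (B x)) {ρ : ι → Ω → ℕ}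
    (hρ : ∀ x, Measurable[m] (ρ x)) {C H : ℝ} (hC : 0 ≤ C)
    (hH : ∀ ω, ∑ x, (ρ x ω : ℝ)⁻¹ ≤ H) :
    μ (⋃ x, B x ∩ {ω | 0 < ρ x ω ∧ ρ x ω * μ[(B x).indicator (fun _ => (1 : ℝ)) | m] ω ≤ C})
      ≤ ENNReal.ofReal (C * H) := by
  set E := fun x => B x ∩ {ω | 0 < ρ x ω ∧ ρ x ω * μ[(B x).indicator (fun _ => (1 : ℝ)) | m] ω ≤ C}
  have hint (x : ι) : Integrable (fun ω => C / ρ x ω) μ :=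
    integrable_const_div_natCast ((hρ x).mono hm le_rfl) C
  have hsum : Integrable (fun ω => C * ∑ x, (ρ x ω : ℝ)⁻¹) μ := by
    simpa only [Finset.mul_sum, div_eq_mul_inv] using
      integrable_finsetSum Finset.univ fun x _ => hint x
  calc μ (⋃ x, E x) ≤ ∑ x, μ (E x) := measure_iUnion_fintype_le μ E
    _ = ENNReal.ofReal (∑ x, μ.real (E x)) := by
        rw [ENNReal.ofReal_sum_of_nonneg fun _ _ => measureReal_nonneg]
        exact Finset.sum_congr rfl fun x _ => (ofReal_measureReal).symm
    _ ≤ ENNReal.ofReal (∑ x, ∫ ω, C / ρ x ω ∂μ) := ENNReal.ofReal_le_ofReal <|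
        Finset.sum_le_sum fun x _ => measureReal_inter_condExp_le_integral_div hm (hB x) (hρ x) hC
    _ = ENNReal.ofReal (∫ ω, C * ∑ x, (ρ x ω : ℝ)⁻¹ ∂μ) := by
        rw [← integral_finsetSum _ fun x _ => hint x]
        simp only [Finset.mul_sum, div_eq_mul_inv]
    _ ≤ ENNReal.ofReal (∫ _, C * H ∂μ) := ENNReal.ofReal_le_ofReal <|
        integral_mono hsum (integrable_const _) fun ω => mul_le_mul_of_nonneg_left (hH ω) hC
    _ = ENNReal.ofReal (C * H) := by simp

end ConditionalMarkov

section SamplePath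

variable {Ω A : Type*} (X : ℤ → Ω → A)

def samplePath (ω : Ω) (j : ℕ) : A :=
  X (1 + (j : ℤ)) ω

def cylinder (k : ℕ) (x : Fin k → A) : Set Ω :=
  {ω | ∀ m : Fin k, X (1 + (m : ℤ)) ω = x m}

lemma recTime_eq (k : ℕ) (ω : Ω) :
    recTime X k ω = if firstRecurrence (samplePath X ω) k = 0 then ⊤
      else (firstRecurrence (samplePath X ω) k : ℕ∞) := by
  set S := {i | IsRecurrence (samplePath X ω) k i}
  have hS : recTime X k ω = sInf ((↑) '' S : Set ℕ∞) := by
    have hshift (i m : ℕ) : (1 : ℤ) + ↑(i + m) = ↑i + 1 + ↑m := by push_cast; ring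
    unfold recTime
    congr 1
    ext e
    simp only [S, IsRecurrence, samplePath, mem_image, mem_ofPred_eq, hshift]
    exact ⟨fun ⟨i, he, h1, h2⟩ => ⟨i, ⟨h1, h2⟩, he.symm⟩,
      fun ⟨i, ⟨h1, h2⟩, he⟩ => ⟨i, he.symm, h1, h2⟩⟩
  rw [hS]
  split_ifs with h0
  · have hS0 : S = ∅ := (Nat.sInf_eq_zero.1 h0).resolve_left fun h => by simpa using h.1
    rw [hS0, image_empty, sInf_empty]
  · rw [sInf_image]
    exact (ENat.natCast_sInf (Nat.nonempty_of_pos_sInf (Nat.pos_of_ne_zero h0))).symm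

variable [MeasurableSpace A]

lemma measurable_futureSigma {j i : ℤ} (h : j ≤ i) : Measurable[futureSigma X j] (X i) :=
  Measurable.of_comap_le (le_iSup (fun i : {i : ℤ // j ≤ i} =>
    MeasurableSpace.comap (X i) ‹_›) ⟨i, h⟩)

lemma measurable_splice_samplePath {k : ℕ} (x : Fin k → A) (j : ℕ) :
    Measurable[futureSigma X (k + 1)] fun ω => splice x (samplePath X ω) j := by
  unfold splice
  split_ifs with hj
  · exact measurable_const
  · exact measurable_futureSigma X (by omega)

variable [MeasurableSpace Ω]

lemma futureSigma_le (hX : ∀ i, Measurable (X i)) (j : ℤ) :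
    futureSigma X j ≤ ‹MeasurableSpace Ω› :=
  iSup_le fun i => (hX i).comap_le

lemma measurableSet_cylinder [MeasurableSingletonClass A] (hX : ∀ i, Measurable (X i))
    {k : ℕ} (x : Fin k → A) : MeasurableSet (cylinder X k x) :=
  (Measurable.forall fun m => (hX _).eq_const (x m)).setOf

variable (μ : Measure Ω)

lemma condBlockProb_eq (k : ℕ) (j : ℤ) (ω : Ω) :
    condBlockProb μ X k j ω = μ[(cylinder X k fun m => samplePath X ω m).indicator
      (fun _ => (1 : ℝ)) | futureSigma X j] ω := by
  unfold condBlockProb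
  rw [tsum_eq_single (fun m : Fin k => samplePath X ω m)]
  · rw [indicator_of_mem (by exact fun m => rfl), one_mul]
    rfl
  · intro x hx
    rw [indicator_of_notMem (fun h => hx (funext fun m => (h m).symm)), zero_mul]

lemma setOf_recTime_le_subset {k : ℕ} {C : ℝ} (hC : 0 ≤ C) (j : ℤ) :
    {ω | (recTime X k ω : ℝ≥0∞) ≤ ENNReal.ofReal (C / condBlockProb μ X k j ω)}
      ⊆ ⋃ x : Fin k → A, cylinder X k x ∩
        {ω | 0 < firstRecurrence (splice x (samplePath X ω)) k ∧
          firstRecurrence (splice x (samplePath X ω)) k *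
            μ[(cylinder X k x).indicator (fun _ => (1 : ℝ)) | futureSigma X j] ω ≤ C} := by
  intro ω hω
  set x := fun m : Fin k => samplePath X ω m
  refine mem_iUnion.2 ⟨x, fun m => rfl, ?_⟩
  rw [mem_ofPred_eq, condBlockProb_eq, recTime_eq] at hω
  rw [mem_ofPred_eq, splice_self]
  set r := firstRecurrence (samplePath X ω) k
  set q := μ[(cylinder X k x).indicator (fun _ => (1 : ℝ)) | futureSigma X j] ω
  split_ifs at hω with hr0
  · simp at hω
  · have hle : (r : ℝ) ≤ C / q := by
      rwa [ENat.toENNReal_coe, ENNReal.natCast_le_ofReal hr0] at hω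
    have hq : 0 < q := by
      by_contra! hq
      have : (r : ℝ) ≤ 0 := hle.trans (div_nonpos_of_nonneg_of_nonpos hC hq)
      exact hr0 (by exact_mod_cast this.antisymm r.cast_nonneg)
    exact ⟨Nat.pos_of_ne_zero hr0, (le_div_iff₀ hq).1 hle⟩

end SamplePath

/-- For any process over a `D`-ary alphabet and `C > 0`,
`P(R⁽¹⁾_k ≤ C / P(X₁^k|X_{k+1}^∞)) ≤ C(1 + k log D)`. -/
theorem recurrence_markov_lower {Ω A : Type*} [MeasurableSpace Ω] [MeasurableSpace A]
    [MeasurableSingletonClass A] [Fintype A]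
    (μ : Measure Ω) [IsProbabilityMeasure μ] (X : ℤ → Ω → A) (hXmeas : ∀ i, Measurable (X i))
    (k : ℕ) (C : ℝ) (hC : 0 < C) :
    μ {ω | ((recTime X k ω : ℕ∞) : ℝ≥0∞)
        ≤ ENNReal.ofReal (C / condBlockProb μ X k ((k : ℤ) + 1) ω)}
      ≤ ENNReal.ofReal (C * (1 + k * Real.log (Fintype.card A))) :=
  (measure_mono (setOf_recTime_le_subset X μ hC.le _)).trans <|
    measure_iUnion_inter_condExp_le (futureSigma_le X hXmeas _) (measurableSet_cylinder X hXmeas)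
      (fun x => measurable_firstRecurrence (measurable_splice_samplePath X x) k) hC.le
      fun ω => sum_inv_firstRecurrence_splice_le k (samplePath X ω)
end

section
/- Let (X_i)_{i∈ℤ} be a stationary process over a countable alphabet and define the context length I_k := min{i : log i ≥ H_∞(X₁^k | X_{k+1}^{k+i})}. Then log I_k - log 2 ≤ H_•(X₁^k | X_{k+1}^∞) ≤ 3 log I_k + 1/I_k. -/
/-! Only the sequence `q i = exp (-H_∞(X₁^k | X_{k+1}^{k+i}))` matters. It is nondecreasing with
values in `(0, 1]`, `I := I_k` is the first `i ≥ 1` with `i * q i ≥ 1`, and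
`H_• = -log ∑_{i ≥ 1} q i / (i (i + 1))`. The weights `1 / (i (i + 1)) = 1/i - 1/(i+1)` telescope:
the terms `i < I` are bounded by `q (I - 1) ≤ 1 / (I - 1)` and contribute at most `1/I`, the tail
`i ≥ I` at most `1/I`, so the sum is at most `2/I`. Conversely the single term `i = I` is at least
`1 / (I² (I + 1))`, and `log (I + 1) ≤ log I + 1/I`. -/

open MeasureTheory ProbabilityTheory Filter Set
open scoped ENNReal NNReal

open Topology

namespace Real

lemma neg_log_le_log_iff_one_le_mul {a b : ℝ} (ha : 0 < a) (hb : 0 < b) :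
    -log a ≤ log b ↔ 1 ≤ b * a := by
  rw [neg_le_iff_add_nonneg, ← log_mul hb.ne' ha.ne', log_nonneg_iff (mul_pos hb ha)]

lemma log_add_one_le_log_add_inv {x : ℝ} (hx : 0 < x) : log (x + 1) ≤ log x + x⁻¹ := by
  have h := log_le_sub_one_of_pos (show 0 < (x + 1) / x by positivity)
  rw [log_div (by positivity) hx.ne', add_div, div_self hx.ne', one_div] at h
  linarith

end Real

open Real

lemma hasSum_sub_succ_of_antitone {f : ℕ → ℝ} (hf : Antitone f)
    (hlim : Tendsto f atTop (𝓝 0)) : HasSum (fun j => f j - f (j + 1)) (f 0) := by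
  rw [hasSum_iff_tendsto_nat_of_nonneg fun j => sub_nonneg.2 (hf j.le_succ)]
  simp only [Finset.sum_range_sub']
  simpa using tendsto_const_nhds.sub hlim

lemma hasSum_inv_mul_add_one_add_two (n : ℕ) :
    HasSum (fun j : ℕ => (((j : ℝ) + n + 1) * ((j : ℝ) + n + 2))⁻¹) ((n : ℝ) + 1)⁻¹ := by
  have hlim : Tendsto (fun j : ℕ => ((j : ℝ) + n + 1)⁻¹) atTop (𝓝 0) :=
    tendsto_inv_atTop_zero.comp <| tendsto_atTop_add_const_right _ _ <|
      tendsto_atTop_add_const_right _ _ tendsto_natCast_atTop_atTop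
  convert hasSum_sub_succ_of_antitone (fun i j hij => by gcongr) hlim using 1
  · ext j
    push_cast
    field_simp
    ring
  · simp

lemma sum_range_inv_mul_add_one_add_two (n : ℕ) :
    ∑ j ∈ Finset.range n, (((j : ℝ) + 1) * ((j : ℝ) + 2))⁻¹ = n / (n + 1) := by
  induction n with
  | zero => simp
  | succ n ih =>
    rw [Finset.sum_range_succ, ih]
    push_cast
    field_simp
    ring

noncomputable def weightedSum (q : ℕ → ℝ) : ℝ :=
  ∑' j : ℕ, q (j + 1) / (((j : ℝ) + 1) * ((j : ℝ) + 2))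

section WeightedSum

variable {q : ℕ → ℝ}

lemma summable_weightedSum (h0 : ∀ i, 0 ≤ q i) (h1 : ∀ i, q i ≤ 1) :
    Summable fun j : ℕ => q (j + 1) / (((j : ℝ) + 1) * ((j : ℝ) + 2)) := by
  refine .of_nonneg_of_le (fun j => by have := h0 (j + 1); positivity) (fun j => ?_)
    (hasSum_inv_mul_add_one_add_two 0).summable
  rw [div_eq_mul_inv]
  simpa using mul_le_of_le_one_left (by positivity) (h1 (j + 1))

lemma weightedSum_le (hq : Monotone q) (h0 : ∀ i, 0 ≤ q i) (h1 : ∀ i, q i ≤ 1) {n : ℕ}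
    (hn : n * q n ≤ 1) : weightedSum q ≤ 2 / (n + 1) := by
  have hs := summable_weightedSum h0 h1
  have head : ∑ j ∈ Finset.range n, q (j + 1) / (((j : ℝ) + 1) * ((j : ℝ) + 2))
      ≤ ((n : ℝ) + 1)⁻¹ :=
    calc _ ≤ ∑ j ∈ Finset.range n, q n * (((j : ℝ) + 1) * ((j : ℝ) + 2))⁻¹ :=
          Finset.sum_le_sum fun j hj => by
            rw [div_eq_mul_inv]
            gcongr
            exact hq (Finset.mem_range.1 hj)
      _ = n * q n / (n + 1) := by
          rw [← Finset.mul_sum, sum_range_inv_mul_add_one_add_two]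
          ring
      _ ≤ ((n : ℝ) + 1)⁻¹ := by
          rw [inv_eq_one_div]
          gcongr
  have tail : ∑' j, q (j + n + 1) / ((((j + n : ℕ) : ℝ) + 1) * (((j + n : ℕ) : ℝ) + 2))
      ≤ ((n : ℝ) + 1)⁻¹ := by
    refine hasSum_le (fun j => ?_) ((summable_nat_add_iff n).2 hs).hasSum
      (hasSum_inv_mul_add_one_add_two n)
    push_cast
    rw [div_eq_mul_inv]
    exact mul_le_of_le_one_left (by positivity) (h1 _)
  rw [weightedSum, ← hs.sum_add_tsum_nat_add n, div_eq_mul_inv]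
  linarith

lemma inv_le_weightedSum (h0 : ∀ i, 0 ≤ q i) (h1 : ∀ i, q i ≤ 1) {n : ℕ}
    (hn : 1 ≤ (n + 1) * q (n + 1)) : (((n : ℝ) + 1) ^ 2 * ((n : ℝ) + 2))⁻¹ ≤ weightedSum q := by
  have hqn : ((n : ℝ) + 1)⁻¹ ≤ q (n + 1) := by
    rwa [inv_le_iff_one_le_mul₀' (by positivity)]
  calc _ = ((n : ℝ) + 1)⁻¹ / (((n : ℝ) + 1) * ((n : ℝ) + 2)) := by
        field_simp
    _ ≤ q (n + 1) / (((n : ℝ) + 1) * ((n : ℝ) + 2)) := by gcongr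
    _ ≤ weightedSum q :=
        (summable_weightedSum h0 h1).le_tsum n fun j _ => by have := h0 (j + 1); positivity

theorem neg_log_weightedSum_bounds (hq : Monotone q) (h0 : ∀ i, 0 ≤ q i) (h1 : ∀ i, q i ≤ 1)
    {n : ℕ} (hn : n * q n ≤ 1) (hn1 : 1 ≤ (n + 1) * q (n + 1)) :
    log (n + 1) - log 2 ≤ -log (weightedSum q) ∧
      -log (weightedSum q) ≤ 3 * log (n + 1) + 1 / (n + 1) := by
  have hlow := inv_le_weightedSum h0 h1 hn1
  have hpos : 0 < weightedSum q := lt_of_lt_of_le (by positivity) hlow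
  constructor
  · have := log_le_log hpos (weightedSum_le hq h0 h1 hn)
    rw [log_div two_ne_zero (by positivity)] at this
    linarith
  · have := log_le_log (by positivity) hlow
    rw [log_inv, log_mul (by positivity) (by positivity), log_pow] at this
    have h2 := log_add_one_le_log_add_inv (x := (n : ℝ) + 1) (by positivity)
    rw [add_assoc, one_add_one_eq_two] at h2
    rw [one_div]
    push_cast at this
    linarith

lemma exists_sInf_eq_succ (hq : Monotone q) (hpos : 0 < q 0) :
    ∃ n : ℕ, sInf {i : ℕ | 1 ≤ i ∧ 1 ≤ (i : ℝ) * q i} = n + 1 ∧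
      n * q n ≤ 1 ∧ 1 ≤ (n + 1) * q (n + 1) := by
  set S := {i : ℕ | 1 ≤ i ∧ 1 ≤ (i : ℝ) * q i}
  have hne : S.Nonempty := by
    obtain ⟨N, hN⟩ := exists_nat_gt (q 0)⁻¹
    have hN0 : (0 : ℝ) < N := lt_trans (by positivity) hN
    refine ⟨N, by exact_mod_cast hN0, ?_⟩
    calc (1 : ℝ) = (q 0)⁻¹ * q 0 := (inv_mul_cancel₀ hpos.ne').symm
      _ ≤ N * q 0 := by gcongr
      _ ≤ N * q N := by gcongr; exact hq N.zero_le
  obtain ⟨hS1, hSq⟩ := Nat.sInf_mem hne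
  obtain ⟨n, hn⟩ : ∃ n, sInf S = n + 1 := ⟨sInf S - 1, by omega⟩
  refine ⟨n, hn, ?_, by rw [hn] at hSq; exact_mod_cast hSq⟩
  rcases n.eq_zero_or_pos with rfl | hn0
  · simp
  · have := Nat.notMem_of_lt_sInf (show n < sInf S by omega)
    simp only [S, Set.mem_ofPred_eq, not_and, not_le] at this
    exact (this hn0).le

end WeightedSum

section GuessProb

variable {Ω A : Type*} {X : ℤ → Ω → A} {k i : ℕ}

def blockPair (X : ℤ → Ω → A) (k i : ℕ) (ω : Ω) : (Fin k → A) × (Fin i → A) :=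
  (fun m => X (1 + (m : ℤ)) ω, fun m => X ((k : ℤ) + 1 + (m : ℤ)) ω)

lemma preimage_blockPair_singleton (x : Fin k → A) (y : Fin i → A) :
    blockPair X k i ⁻¹' {(x, y)} = {ω | (∀ m : Fin k, X (1 + (m : ℤ)) ω = x m) ∧
      ∀ m : Fin i, X ((k : ℤ) + 1 + (m : ℤ)) ω = y m} := by
  ext ω
  simp [blockPair, funext_iff]

variable [MeasurableSpace Ω] {μ : Measure Ω}

/-- `∑_y max_x P(X₁^k = x, X_{k+1}^{k+i} = y) = exp (-H_∞(X₁^k | X_{k+1}^{k+i}))`, the probability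
of guessing `X₁^k` correctly from `X_{k+1}^{k+i}`. -/
noncomputable def guessProb (μ : Measure Ω) (X : ℤ → Ω → A) (k i : ℕ) : ℝ≥0∞ :=
  ∑' y : Fin i → A, ⨆ x : Fin k → A, μ (blockPair X k i ⁻¹' {(x, y)})

lemma guessProb_mono [Countable A] : Monotone (guessProb μ X k) := by
  refine monotone_nat_of_le_succ fun i => ?_
  have hsub (x : Fin k → A) (y : Fin i → A) : blockPair X k i ⁻¹' {(x, y)} ⊆
      ⋃ a, blockPair X k (i + 1) ⁻¹' {(x, Fin.snoc y a)} := by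
    intro ω hω
    simp only [mem_preimage, mem_singleton_iff, Prod.ext_iff] at hω
    refine mem_iUnion.2 ⟨(blockPair X k (i + 1) ω).2 (Fin.last i), ?_⟩
    rw [mem_preimage, mem_singleton_iff, ← hω.1, ← hω.2]
    exact Prod.ext rfl (Fin.snoc_init_self _).symm
  calc guessProb μ X k i
      ≤ ∑' y, ⨆ x, ∑' a, μ (blockPair X k (i + 1) ⁻¹' {(x, Fin.snoc y a)}) :=
        ENNReal.tsum_le_tsum fun y => iSup_mono fun x =>
          (measure_mono (hsub x y)).trans (measure_iUnion_le _)
    _ ≤ ∑' y, ∑' a, ⨆ x, μ (blockPair X k (i + 1) ⁻¹' {(x, Fin.snoc y a)}) :=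
        ENNReal.tsum_le_tsum fun y => iSup_le fun x => ENNReal.tsum_le_tsum fun a =>
          le_iSup (fun x => μ (blockPair X k (i + 1) ⁻¹' {(x, Fin.snoc y a)})) x
    _ = ∑' p : A × (Fin i → A), ⨆ x, μ (blockPair X k (i + 1) ⁻¹' {(x, Fin.snoc p.2 p.1)}) := by
        rw [ENNReal.tsum_comm]
        exact ENNReal.tsum_prod.symm
    _ = guessProb μ X k (i + 1) :=
        (Fin.snocEquiv fun _ => A).tsum_eq fun z => ⨆ x, μ (blockPair X k (i + 1) ⁻¹' {(x, z)})

lemma guessProb_ne_zero [Countable A] [NeZero μ] : guessProb μ X k i ≠ 0 := by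
  intro h
  simp only [guessProb, ENNReal.tsum_eq_zero, ENNReal.iSup_eq_zero] at h
  refine NeZero.ne μ (Measure.measure_univ_eq_zero.1 ?_)
  rw [← preimage_univ (f := blockPair X k i),
    measure_preimage_eq_zero_iff_of_countable countable_univ]
  rintro ⟨x, y⟩ -
  exact h y x

lemma condMinEntropy_eq_neg_log_guessProb [IsFiniteMeasure μ] :
    condMinEntropy μ X k i = -log (guessProb μ X k i).toReal := by
  rw [guessProb, ENNReal.tsum_toReal_eq fun y => ne_top_of_le_ne_top (measure_ne_top μ univ)
    (iSup_le fun x => measure_mono (subset_univ _))]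
  simp_rw [ENNReal.toReal_iSup fun x => measure_ne_top μ _, preimage_blockPair_singleton]
  rfl

variable [MeasurableSpace A] [MeasurableSingletonClass A] [Countable A]

lemma guessProb_le_measure_univ (hX : ∀ j, Measurable (X j)) : guessProb μ X k i ≤ μ univ := by
  have hmeas : Measurable (blockPair X k i) :=
    (measurable_pi_lambda _ fun m => hX _).prodMk (measurable_pi_lambda _ fun m => hX _)
  calc guessProb μ X k i ≤ ∑' y, ∑' x, μ (blockPair X k i ⁻¹' {(x, y)}) :=
        ENNReal.tsum_le_tsum fun y => iSup_le fun x => ENNReal.le_tsum x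
    _ = ∑' p, μ (blockPair X k i ⁻¹' {p}) := by rw [ENNReal.tsum_comm, ← ENNReal.tsum_prod]
    _ = μ univ := by
        rw [← tsum_univ, tsum_measure_preimage_singleton countable_univ
          fun p _ => hmeas (measurableSet_singleton p), preimage_univ]

lemma toReal_guessProb_le_one [IsProbabilityMeasure μ] (hX : ∀ j, Measurable (X j)) :
    (guessProb μ X k i).toReal ≤ 1 :=
  ENNReal.toReal_le_of_le_ofReal zero_le_one <| by
    simpa using guessProb_le_measure_univ (μ := μ) hX

variable [IsFiniteMeasure μ]

lemma guessProb_ne_top (hX : ∀ j, Measurable (X j)) : guessProb μ X k i ≠ ∞ :=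
  ne_top_of_le_ne_top (measure_ne_top μ univ) (guessProb_le_measure_univ hX)

lemma toReal_guessProb_pos [NeZero μ] (hX : ∀ j, Measurable (X j)) :
    0 < (guessProb μ X k i).toReal :=
  ENNReal.toReal_pos guessProb_ne_zero (guessProb_ne_top hX)

lemma contextLen_eq_sInf [NeZero μ] (hX : ∀ j, Measurable (X j)) :
    contextLen μ X k = sInf {i : ℕ | 1 ≤ i ∧ 1 ≤ (i : ℝ) * (guessProb μ X k i).toReal} := by
  refine congrArg sInf (Set.ext fun i => and_congr_right fun hi => ?_)
  rw [condMinEntropy_eq_neg_log_guessProb]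
  exact neg_log_le_log_iff_one_le_mul (toReal_guessProb_pos hX) (by exact_mod_cast hi)

lemma weightedCondEntropy_eq [NeZero μ] (hX : ∀ j, Measurable (X j)) :
    weightedCondEntropy μ X k = -log (weightedSum fun i => (guessProb μ X k i).toReal) := by
  simp_rw [weightedCondEntropy, condMinEntropy_eq_neg_log_guessProb, neg_neg,
    exp_log (toReal_guessProb_pos hX)]
  rfl

end GuessProb

theorem weightedCondEntropy_contextLen_general {Ω A : Type*} [MeasurableSpace Ω] [MeasurableSpace A]
    [MeasurableSingletonClass A] [Countable A]
    (μ : Measure Ω) [IsProbabilityMeasure μ] (X : ℤ → Ω → A) (hXmeas : ∀ i, Measurable (X i))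
    (k : ℕ) :
    Real.log (contextLen μ X k) - Real.log 2 ≤ weightedCondEntropy μ X k ∧
    weightedCondEntropy μ X k
      ≤ 3 * Real.log (contextLen μ X k) + 1 / (contextLen μ X k) := by
  set q := fun i => (guessProb μ X k i).toReal
  have hq_mono : Monotone q := fun i j hij =>
    ENNReal.toReal_mono (guessProb_ne_top hXmeas) (guessProb_mono hij)
  obtain ⟨n, hI, hn, hn1⟩ := exists_sInf_eq_succ hq_mono (toReal_guessProb_pos hXmeas)
  rw [weightedCondEntropy_eq hXmeas, contextLen_eq_sInf hXmeas, hI]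
  push_cast
  exact neg_log_weightedSum_bounds hq_mono (fun i => (toReal_guessProb_pos hXmeas).le)
    (fun i => toReal_guessProb_le_one hXmeas) hn hn1

/-- For a stationary process over a countable alphabet, the context length `I_k` satisfies
`log I_k - log 2 ≤ H_•(X₁^k|X_{k+1}^∞) ≤ 3 log I_k + 1/I_k`. -/
theorem weightedCondEntropy_contextLen {Ω A : Type*} [MeasurableSpace Ω] [MeasurableSpace A]
    [MeasurableSingletonClass A] [Countable A]
    (μ : Measure Ω) [IsProbabilityMeasure μ] (X : ℤ → Ω → A) (hXmeas : ∀ i, Measurable (X i))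
    (T : Ω → Ω) (hT : MeasurePreserving T μ μ) (hshift : ∀ i ω, X i (T ω) = X (i + 1) ω)
    (k : ℕ) (hk : 1 ≤ k) :
    Real.log (contextLen μ X k) - Real.log 2 ≤ weightedCondEntropy μ X k ∧
    weightedCondEntropy μ X k
      ≤ 3 * Real.log (contextLen μ X k) + 1 / (contextLen μ X k) :=
  weightedCondEntropy_contextLen_general μ X hXmeas k
end
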